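/- Let t ≥ 1 and let π be a 213-avoiding permutation of [n]. Then π avoids the increasing pattern 12⋯(t+2) if and only if lrp(λ(π)) ≤ t, where lrp(T) is the maximum number of right edges in any path of the binary tree T = λ(π). -/

import Mathlib

open scoped Classical
noncomputable section

/-- Stack-sorting `S` implemented with fuel: `S(L n R) = S(L) S(R) n`. -/
def ssFuel : ℕ → List ℕ → List ℕ
  | 0, _ => []
  | _ + 1, [] => []
  | f + 1, x :: xs =>
    let l := x :: xs
    let m := l.foldr max 0
    let i := l.idxOf m
    ssFuel f (l.take i) ++ ssFuel f (l.drop (i + 1)) ++ [m]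

def stackSort (l : List ℕ) : List ℕ := ssFuel l.length l

/-- One-line word (with letters `1,…,n`) of a permutation of `Fin n`. -/
def word {n : ℕ} (π : Equiv.Perm (Fin n)) : List ℕ := List.ofFn fun i => (π i : ℕ) + 1

/-- The identity word `1 2 ⋯ n`. -/
def sortedWord (n : ℕ) : List ℕ := List.ofFn fun i : Fin n => (i : ℕ) + 1

/-- `π` is `t`-stack-sortable. -/
def StackSortable (t : ℕ) {n : ℕ} (π : Equiv.Perm (Fin n)) : Prop :=
  stackSort^[t] (word π) = sortedWord n

/-- `π` avoids the pattern `p`. -/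
def Avoids {n k : ℕ} (π : Equiv.Perm (Fin n)) (p : Equiv.Perm (Fin k)) : Prop :=
  ¬ ∃ f : Fin k → Fin n, StrictMono f ∧ ∀ a b : Fin k, p a < p b ↔ π (f a) < π (f b)

def p321 : Equiv.Perm (Fin 3) := Fin.revPerm
def p213 : Equiv.Perm (Fin 3) := Equiv.swap 0 1
def p231 : Equiv.Perm (Fin 3) := finRotate 3
def p132 : Equiv.Perm (Fin 3) := Equiv.swap 1 2

def mlw {n : ℕ} (π : Equiv.Perm (Fin n)) : ℕ :=
  (Finset.univ.filter fun j : Fin n => ∀ k, j < k → π j < π k).sup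
    fun j => (j : ℕ) - (π j : ℕ)

def fixNum {n : ℕ} (π : Equiv.Perm (Fin n)) : ℕ :=
  (Finset.univ.filter fun i => π i = i).card

def dropNum {n : ℕ} (π : Equiv.Perm (Fin n)) : ℕ :=
  (Finset.univ.filter fun i => π i < i).card

def desNum {n : ℕ} (π : Equiv.Perm (Fin n)) : ℕ :=
  (Finset.univ.filter fun i : Fin n =>
    ∃ h : (i : ℕ) + 1 < n, π ⟨(i : ℕ) + 1, h⟩ < π i).card

def badNum {n : ℕ} (π : Equiv.Perm (Fin n)) : ℕ :=
  (Finset.univ.filter fun i : Fin n =>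
    (∀ j, i < j → π i < π j) ∧
      ((i : ℕ) = 0 ∨
        π ⟨(i : ℕ) - 1, lt_of_le_of_lt (Nat.sub_le _ _) i.isLt⟩ < π i)).card

def invNum {n : ℕ} (π : Equiv.Perm (Fin n)) : ℕ :=
  (Finset.univ.filter fun p : Fin n × Fin n => p.1 < p.2 ∧ π p.2 < π p.1).card

/-- Binary trees with natural-number labels. -/
inductive BT : Type
  | leaf : BT
  | node : BT → ℕ → BT → BT
  deriving DecidableEq

/-- The increasing-binary-tree map `λ`, implemented with fuel. -/
def lamFuel : ℕ → List ℕ → BT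
  | 0, _ => .leaf
  | f + 1, [] => .leaf
  | f + 1, x :: xs =>
    let l := x :: xs
    let m := xs.foldr min x
    let i := l.idxOf m
    .node (lamFuel f (l.take i)) m (lamFuel f (l.drop (i + 1)))

def lam (l : List ℕ) : BT := lamFuel l.length l

/-- In-order reading word of a binary tree. -/
def BT.labels : BT → List ℕ
  | .leaf => []
  | .node l x r => l.labels ++ x :: r.labels

/-- Maximum number of right edges in a descending path starting at the root. -/
def rstart : BT → ℕ
  | .leaf => 0
  | .node l _ .leaf => rstart l
  | .node l _ r => max (rstart l) (1 + rstart r)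

/-- Maximum number of right edges in any descending path of the tree. -/
def rany : BT → ℕ
  | .leaf => 0
  | .node l x r => max (rstart (.node l x r)) (max (rany l) (rany r))

def BT.isLeaf : BT → Bool
  | .leaf => true
  | _ => false

/-- Does the tree contain a left edge? -/
def hasLeft : BT → Bool
  | .leaf => false
  | .node l _ r => (!l.isLeaf) || hasLeft l || hasLeft r

/-- The right arm of a tree: the list of pairs (label, left subtree) along the maximal
right path from the root. -/
def armSubs : BT → List (ℕ × BT)
  | .leaf => []
  | .node l x r => (x, l) :: armSubs r

/-- `lrrp`: one plus the maximal number of right edges in a restricted (right-arm-avoiding)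
descending path; `0` if the tree has no left edge. -/
def lrrp (T : BT) : ℕ :=
  if hasLeft T then 1 + ((armSubs T).map fun p => rany p.2).foldr max 0 else 0

/-- A pure right chain: no node has a left child. -/
def isRightChain : BT → Prop
  | .leaf => True
  | .node l _ r => l = .leaf ∧ isRightChain r

/-- Increasing binary tree: each label is smaller than all labels in its subtrees. -/
def Increasing : BT → Prop
  | .leaf => True
  | .node l x r =>
      (∀ y ∈ l.labels, x < y) ∧ (∀ y ∈ r.labels, x < y) ∧ Increasing l ∧ Increasing r

/-- `321`-avoiding tree: every right chain hangs off the right arm (equivalently, the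
path from the root to any right leaf has exactly one left edge), and the right chains are
ordered consistently with their attaching nodes. -/
def Is321Tree (T : BT) : Prop :=
  (∀ p ∈ armSubs T, isRightChain p.2) ∧
    ∀ p ∈ armSubs T, ∀ q ∈ armSubs T, p.2 ≠ BT.leaf → q.2 ≠ BT.leaf →
      (p.1 < q.1 ↔ ∀ a ∈ p.2.labels, ∀ b ∈ q.2.labels, a < b)

/-- Labels of nodes without right child. -/
def noRight : BT → List ℕ
  | .leaf => []
  | .node l x .leaf => noRight l ++ [x]
  | .node l x r => noRight l ++ noRight r

/-- Labels of the right leaves: nodes without right child not on the right arm. -/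
def rightLeafLabels (T : BT) : List ℕ :=
  ((armSubs T).map fun p => noRight p.2).flatten

/-- `a` is the value of a right-to-left minimum of the word `w`. -/
def IsRLMinVal (w : List ℕ) (a : ℕ) : Prop :=
  ∃ j, j < w.length ∧ w.getD j 0 = a ∧ ∀ k, j < k → k < w.length → a < w.getD k 0

/-- Insert `b` immediately before the first letter exceeding `b` (or at the end). -/
def insBefore (b : ℕ) : List ℕ → List ℕ
  | [] => [b]
  | x :: xs => if b < x then b :: x :: xs else x :: insBefore b xs

/-- The relocation `S_b`: delete `b` and reinsert it immediately before the leftmost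
letter to the right of its position that exceeds `b`, or at the end. -/
def reloc (b : ℕ) (w : List ℕ) : List ℕ :=
  w.take (w.idxOf b) ++ insBefore b (w.drop (w.idxOf b + 1))

/-- The descent tops of `w`, listed in increasing order. -/
def dtopList (w : List ℕ) : List ℕ :=
  (((List.range (w.length - 1)).filter fun i => w.getD (i + 1) 0 < w.getD i 0).map
      fun i => w.getD i 0).mergeSort fun a b => decide (a ≤ b)

/-!
In `λ(w)` the right subtree of a node `x` consists of letters that follow `x` in `w` and exceed
it, so the nodes at which a descending path turns right, followed by its last node, form an
increasing subsequence: every word has an increasing subsequence of length `lrp(λ(w)) + 1`.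
Conversely, if `w = σ m τ` with `m` minimal avoids `213`, no increasing subsequence takes letters
from both `σ` and `τ` (a letter `a` of `σ` and a larger `c` of `τ` would give the occurrence
`a m c`), so by induction its length is at most one more than the number of right edges of some
path starting at the root.
-/

open List

theorem List.sublist_ofFn_iff {α : Type*} {n : ℕ} {g : Fin n → α} {s : List α} :
    s <+ ofFn g ↔ ∃ (k : ℕ) (f : Fin k → Fin n), StrictMono f ∧ s = ofFn (g ∘ f) := by
  constructor
  · intro hs
    obtain ⟨F, hF⟩ := sublist_iff_exists_fin_orderEmbedding_get_eq.1 hs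
    refine ⟨s.length, Fin.cast length_ofFn ∘ F, fun a b hab => F.strictMono hab, ?_⟩
    refine ext_get (by simp) fun i h₁ _ => ?_
    simpa [Fin.cast] using hF ⟨i, h₁⟩
  · rintro ⟨k, f, hf, rfl⟩
    rw [← map_ofFn, ofFn_eq_map (f := g)]
    refine (sublist_of_subperm_of_sortedLE ?_ ?_ ?_).map g
    · exact subperm_of_subset (nodup_ofFn.2 hf.injective) fun x _ => mem_finRange x
    · exact (sortedLT_ofFn_iff.2 hf).sortedLE
    · exact (sortedLT_finRange n).sortedLE

theorem nodup_word {n : ℕ} (π : Equiv.Perm (Fin n)) : (word π).Nodup :=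
  nodup_ofFn.2 fun a b hab => π.injective (Fin.ext (by simpa using hab))

theorem avoids_one_iff {n k : ℕ} (π : Equiv.Perm (Fin n)) :
    Avoids π (1 : Equiv.Perm (Fin k)) ↔
      ¬ ∃ s : List ℕ, s <+ word π ∧ s.Pairwise (· < ·) ∧ s.length = k := by
  simp only [Avoids, word, sublist_ofFn_iff, Equiv.Perm.one_apply]
  refine not_congr ⟨fun ⟨f, hf, hπf⟩ => ⟨_, ⟨k, f, hf, rfl⟩, ?_, length_ofFn⟩, ?_⟩
  · rw [← sortedLT_iff_pairwise, sortedLT_ofFn_iff]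
    exact fun a b hab => Nat.succ_lt_succ ((hπf a b).1 hab)
  · rintro ⟨_, ⟨k', f, hf, rfl⟩, hsort, hlen⟩
    rw [length_ofFn] at hlen
    subst hlen
    rw [← sortedLT_iff_pairwise, sortedLT_ofFn_iff] at hsort
    have hπf : StrictMono (π ∘ f) := fun a b hab => Nat.succ_lt_succ_iff.1 (hsort hab)
    exact ⟨f, hf, fun a b => hπf.lt_iff_lt.symm⟩

def Avoids213 (w : List ℕ) : Prop := ¬ ∃ a b c : ℕ, [a, b, c] <+ w ∧ b < a ∧ a < c

theorem Avoids213.sublist {s w : List ℕ} (h : Avoids213 w) (hs : s <+ w) : Avoids213 s :=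
  fun ⟨a, b, c, habc, hba, hac⟩ => h ⟨a, b, c, habc.trans hs, hba, hac⟩

theorem p213_lt_iff {α : Type*} [LinearOrder α] {g : Fin 3 → α} (h₁₀ : g 1 < g 0)
    (h₀₂ : g 0 < g 2) (u v : Fin 3) : p213 u < p213 v ↔ g u < g v := by
  have h₁₂ := h₁₀.trans h₀₂
  fin_cases u <;> fin_cases v <;> simp [p213, Equiv.swap_apply_of_ne_of_ne, *, h₁₀.not_gt,
    h₀₂.not_gt, h₁₂.not_gt]

theorem avoids213_word {n : ℕ} {π : Equiv.Perm (Fin n)} (h : Avoids π p213) :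
    Avoids213 (word π) := by
  rintro ⟨a, b, c, habc, hba, hac⟩
  obtain ⟨k, f, hf, hs⟩ := sublist_ofFn_iff.1 habc
  obtain rfl : k = 3 := by simpa using (congrArg length hs).symm
  simp only [ofFn_succ, Fin.succ_zero_eq_one, Fin.succ_one_eq_two, ofFn_zero, Function.comp,
    cons.injEq] at hs
  obtain ⟨rfl, rfl, rfl, -⟩ := hs
  exact h ⟨f, hf,
    p213_lt_iff (g := fun i => π (f i)) (by simpa using hba) (by simpa using hac)⟩

theorem foldr_min_le {α : Type*} [LinearOrder α] (x : α) (xs : List α) :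
    ∀ a ∈ x :: xs, xs.foldr min x ≤ a := by
  induction xs with
  | nil => simp
  | cons y ys ih =>
    simp only [mem_cons, foldr_cons, forall_eq_or_imp] at ih ⊢
    exact ⟨min_le_of_right_le ih.1, min_le_left _ _, fun a ha => min_le_of_right_le (ih.2 a ha)⟩

theorem foldr_min_mem {α : Type*} [LinearOrder α] (x : α) (xs : List α) :
    xs.foldr min x ∈ x :: xs := by
  induction xs with
  | nil => simp
  | cons y ys ih =>
    rw [foldr_cons]
    rcases min_choice y (ys.foldr min x) with h | h
    · simp [h]
    · rw [h]
      simp only [mem_cons] at ih ⊢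
      tauto

theorem lamFuel_congr {f g : ℕ} {l : List ℕ} (hf : l.length ≤ f) (hg : l.length ≤ g) :
    lamFuel f l = lamFuel g l := by
  induction f generalizing g l with
  | zero =>
    obtain rfl : l = [] := length_eq_zero_iff.1 (Nat.le_zero.1 hf)
    cases g <;> rfl
  | succ f ih =>
    match l, g with
    | [], g => cases g <;> rfl
    | x :: xs, 0 => simp at hg
    | x :: xs, g + 1 =>
      have hi := idxOf_lt_length_iff.2 (foldr_min_mem x xs)
      simp only [length_cons] at hf hg hi
      simp only [lamFuel]
      congr 1 <;> apply ih <;> simp only [length_take, length_drop, length_cons] <;>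
        omega

theorem lam_cons (x : ℕ) (xs : List ℕ) :
    ∃ σ m τ, x :: xs = σ ++ m :: τ ∧ lam (x :: xs) = .node (lam σ) m (lam τ) ∧
      ∀ a ∈ x :: xs, m ≤ a := by
  have hi := idxOf_lt_length_iff.2 (foldr_min_mem x xs)
  refine ⟨(x :: xs).take ((x :: xs).idxOf (xs.foldr min x)), xs.foldr min x,
    (x :: xs).drop ((x :: xs).idxOf (xs.foldr min x) + 1), ?_, ?_, foldr_min_le x xs⟩
  · conv_lhs => rw [← take_append_drop ((x :: xs).idxOf (xs.foldr min x)) (x :: xs)]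
    rw [drop_eq_getElem_cons hi, getElem_idxOf hi]
  · simp only [length_cons] at hi
    simp only [lam, length_cons, lamFuel]
    congr 1 <;> apply lamFuel_congr <;> simp only [length_take, length_drop, length_cons] <;>
      omega

theorem labels_lam (w : List ℕ) : (lam w).labels = w := by
  induction hN : w.length using Nat.strong_induction_on generalizing w with
  | _ N ih =>
    cases w with
    | nil => rfl
    | cons x xs =>
      obtain ⟨σ, m, τ, hsplit, hlam, -⟩ := lam_cons x xs
      have hlen := congrArg length hsplit
      simp only [length_cons, length_append] at hlen hN
      rw [hlam, BT.labels, ih σ.length (by omega) σ rfl, ih τ.length (by omega) τ rfl, hsplit]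

theorem increasing_lam {w : List ℕ} (hw : w.Nodup) : Increasing (lam w) := by
  induction hN : w.length using Nat.strong_induction_on generalizing w with
  | _ N ih =>
    cases w with
    | nil => trivial
    | cons x xs =>
      obtain ⟨σ, m, τ, hsplit, hlam, hmin⟩ := lam_cons x xs
      have hlen := congrArg length hsplit
      simp only [length_cons, length_append] at hlen hN
      rw [hsplit] at hw hmin
      have hστ := nodup_middle.1 hw
      rw [hlam, Increasing, labels_lam, labels_lam]
      refine ⟨fun a ha => (hmin a (by simp [ha])).lt_of_ne ?_,
        fun a ha => (hmin a (by simp [ha])).lt_of_ne ?_,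
        ih σ.length (by omega) (hw.sublist (sublist_append_left _ _)) rfl,
        ih τ.length (by omega) (hw.sublist ((sublist_cons_self _ _).trans
          (sublist_append_right _ _))) rfl⟩
      all_goals rintro rfl; exact (nodup_cons.1 hστ).1 (by simp [ha])

theorem BT.labels_sublist_node_left (l : BT) (x : ℕ) (r : BT) :
    l.labels <+ (BT.node l x r).labels :=
  sublist_append_left _ _

theorem BT.labels_sublist_node_right (l : BT) (x : ℕ) (r : BT) :
    r.labels <+ (BT.node l x r).labels :=
  (sublist_cons_self _ _).trans (sublist_append_right _ _)

theorem rstart_left_le_rstart_node (l : BT) (x : ℕ) (r : BT) :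
    rstart l ≤ rstart (.node l x r) := by
  cases r <;> simp [rstart]

theorem rstart_node_of_ne_leaf (l : BT) (x : ℕ) {r : BT} (hr : r ≠ .leaf) :
    rstart (.node l x r) = max (rstart l) (1 + rstart r) := by
  cases r with
  | leaf => exact absurd rfl hr
  | node => rfl

theorem rstart_le_rany (T : BT) : rstart T ≤ rany T := by
  cases T with
  | leaf => rfl
  | node => exact le_max_left _ _

theorem exists_increasing_sublist_of_le_rstart {T : BT} (hT : Increasing T) (hne : T ≠ .leaf)
    {k : ℕ} (hk : k ≤ rstart T) :
    ∃ s, s <+ T.labels ∧ s.Pairwise (· < ·) ∧ s.length = k + 1 := by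
  induction T generalizing k with
  | leaf => exact absurd rfl hne
  | node l x r ihl ihr =>
    obtain ⟨-, hxr, hl, hr⟩ := hT
    have hx : ∃ s, s <+ (BT.node l x r).labels ∧ s.Pairwise (· < ·) ∧ s.length = 0 + 1 :=
      ⟨[x], by simp [BT.labels], pairwise_singleton _ _, rfl⟩
    have of_left : k ≤ rstart l →
        ∃ s, s <+ (BT.node l x r).labels ∧ s.Pairwise (· < ·) ∧ s.length = k + 1 := by
      intro hkl
      rcases eq_or_ne l .leaf with rfl | hl'
      · obtain rfl : k = 0 := Nat.le_zero.1 hkl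
        exact hx
      · obtain ⟨s, hs, hsort, hlen⟩ := ihl hl hl' hkl
        exact ⟨s, hs.trans (BT.labels_sublist_node_left l x r), hsort, hlen⟩
    rcases eq_or_ne r .leaf with rfl | hr'
    · exact of_left hk
    rcases le_max_iff.1 (hk.trans_eq (rstart_node_of_ne_leaf l x hr')) with hkl | hkr
    · exact of_left hkl
    · obtain _ | j := k
      · exact hx
      obtain ⟨s, hs, hsort, hlen⟩ := ihr hr hr' (show j ≤ rstart r by omega)
      refine ⟨x :: s, (hs.cons_cons x).trans (sublist_append_right _ _), ?_, by simp [hlen]⟩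
      exact pairwise_cons.2 ⟨fun a ha => hxr a (hs.subset ha), hsort⟩

theorem exists_increasing_sublist_of_le_rany {T : BT} (hT : Increasing T) (hne : T ≠ .leaf)
    {k : ℕ} (hk : k ≤ rany T) :
    ∃ s, s <+ T.labels ∧ s.Pairwise (· < ·) ∧ s.length = k + 1 := by
  induction T generalizing k with
  | leaf => exact absurd rfl hne
  | node l x r ihl ihr =>
    have hl : Increasing l := hT.2.2.1
    have hr : Increasing r := hT.2.2.2
    rcases le_max_iff.1 hk with hks | hk'
    · exact exists_increasing_sublist_of_le_rstart hT hne hks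
    rcases le_max_iff.1 hk' with hkl | hkr
    · rcases eq_or_ne l .leaf with rfl | hl'
      · exact exists_increasing_sublist_of_le_rstart hT hne (hkl.trans (Nat.zero_le _))
      obtain ⟨s, hs, hsort, hlen⟩ := ihl hl hl' hkl
      exact ⟨s, hs.trans (BT.labels_sublist_node_left l x r), hsort, hlen⟩
    · rcases eq_or_ne r .leaf with rfl | hr'
      · exact exists_increasing_sublist_of_le_rstart hT hne (hkr.trans (Nat.zero_le _))
      obtain ⟨s, hs, hsort, hlen⟩ := ihr hr hr' hkr
      exact ⟨s, hs.trans (BT.labels_sublist_node_right l x r), hsort, hlen⟩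

theorem length_le_rstart_of_avoids213 {T : BT} (hT : Increasing T) (h : Avoids213 T.labels)
    {s : List ℕ} (hs : s <+ T.labels) (hsort : s.Pairwise (· < ·)) :
    s.length ≤ rstart T + 1 := by
  induction T generalizing s with
  | leaf =>
    obtain rfl := sublist_nil.1 hs
    exact Nat.zero_le _
  | node l x r ihl ihr =>
    obtain ⟨hxl, hxr, hl, hr⟩ := hT
    obtain ⟨s₁, s₂, rfl, hs₁, hs₂⟩ := sublist_append_iff.1 hs
    have hsplit : s₁ = [] ∨ s₂ = [] := by
      by_contra! hne
      obtain ⟨a, ha⟩ := exists_mem_of_ne_nil _ hne.1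
      obtain ⟨c, hc⟩ := exists_mem_of_ne_nil _ hne.2
      have hac := (pairwise_append.1 hsort).2.2 a ha c hc
      rcases mem_cons.1 (hs₂.subset hc) with rfl | hc'
      · exact (hxl a (hs₁.subset ha)).asymm hac
      · refine h ⟨a, x, c, ?_, hxl a (hs₁.subset ha), hac⟩
        exact (singleton_sublist.2 (hs₁.subset ha)).append
          ((singleton_sublist.2 hc').cons_cons x)
    rcases hsplit with rfl | rfl
    · rw [nil_append] at hsort ⊢
      rcases eq_or_ne r .leaf with rfl | hr'
      · have := hs₂.length_le
        simp only [BT.labels, length_singleton] at this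
        omega
      have hr_avoid := h.sublist (BT.labels_sublist_node_right l x r)
      rw [rstart_node_of_ne_leaf l x hr']
      rcases sublist_cons_iff.1 hs₂ with hs₂ | ⟨s', rfl, hs'⟩
      · have := ihr hr hr_avoid hs₂ hsort
        omega
      · have := ihr hr hr_avoid hs' hsort.of_cons
        rw [length_cons]
        omega
    · rw [append_nil] at hsort ⊢
      have := ihl hl (h.sublist (BT.labels_sublist_node_left l x r)) hs₁ hsort
      have := rstart_left_le_rstart_node l x r
      omega

theorem stmt17_general (n t : ℕ) (π : Equiv.Perm (Fin n)) (h : Avoids π p213) :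
    Avoids π (1 : Equiv.Perm (Fin (t + 2))) ↔ rany (lam (word π)) ≤ t := by
  have hinc : Increasing (lam (word π)) := increasing_lam (nodup_word π)
  have hlab : (lam (word π)).labels = word π := labels_lam (word π)
  set T := lam (word π)
  rw [avoids_one_iff, ← hlab]
  constructor
  · intro hno
    by_contra! hlt
    have hne : T ≠ .leaf := ne_of_apply_ne rany (Nat.ne_zero_of_lt hlt)
    exact hno (exists_increasing_sublist_of_le_rany hinc hne hlt)
  · rintro hle ⟨s, hs, hsort, hlen⟩
    have := length_le_rstart_of_avoids213 hinc (hlab ▸ avoids213_word h) hs hsort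
    have := rstart_le_rany T
    omega

/-- A 213-avoiding `π` avoids the increasing pattern `12⋯(t+2)` iff `lrp(λ(π)) ≤ t`. -/
theorem stmt17 (n t : ℕ) (ht : 1 ≤ t) (π : Equiv.Perm (Fin n)) (h : Avoids π p213) :
    Avoids π (1 : Equiv.Perm (Fin (t + 2))) ↔ rany (lam (word π)) ≤ t :=
  stmt17_general n t π h

end
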